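/- arXiv:1909.10648 — 2 statements merged into one kernel-verified Lean document; each statement's English description precedes it below -/
import Mathlib

section
/- For all a, b ∈ ℝ, r ≥ 2 and k ≥ 0, setting a_k = max{−k, min{a, k}} and b_k = max{−k, min{b, k}}, one has (4(r−1)/r²)·(|a_k|^{r/2} − |b_k|^{r/2})² ≤ (a−b)·(a_k|a_k|^{r−2} − b_k|b_k|^{r−2}). -/
/-!
Write `g t = |t| ^ (r/2 - 1)` and note that `d/dt (t |t|^q) = (q+1) |t|^q`. Then
`x|x|^(r-2) - y|y|^(r-2) = (r-1) ∫_y^x g²`, while `||x|^(r/2) - |y|^(r/2)|` is at most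
`|x|x|^(r/2-1) - y|y|^(r/2-1)| = (r/2) ∫_y^x g`, so Cauchy–Schwarz `(∫ g)² ≤ (x-y) ∫ g²`
gives the inequality for `x = a_k`, `y = b_k`. Truncation is monotone and 1-Lipschitz and
`t ↦ t|t|^(r-2)` is monotone, so the factor `a_k - b_k` may be replaced by `a - b`.
-/

open Real MeasureTheory Filter Topology

lemma hasDerivAt_mul_abs_rpow {q : ℝ} (hq : 0 ≤ q) (t : ℝ) :
    HasDerivAt (fun s : ℝ => s * |s| ^ q) ((q + 1) * |t| ^ q) t := by
  rcases lt_trichotomy t 0 with ht | rfl | ht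
  · have hneg : HasDerivAt (fun s : ℝ => -(-s) ^ (q + 1)) ((q + 1) * (-t) ^ q) t := by
      simpa [Function.comp_def, Pi.neg_def] using ((hasDerivAt_rpow_const (p := q + 1)
        (Or.inl (neg_ne_zero.2 ht.ne))).comp t (hasDerivAt_neg t)).neg
    rw [abs_of_neg ht]
    refine hneg.congr_of_eventuallyEq ?_
    filter_upwards [eventually_lt_nhds ht] with s hs
    rw [abs_of_neg hs, rpow_add_one (neg_ne_zero.2 hs.ne)]
    ring
  · rw [hasDerivAt_iff_tendsto_slope]
    have hval : (q + 1) * |(0 : ℝ)| ^ q = |(0 : ℝ)| ^ q := by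
      rcases hq.eq_or_lt with rfl | hq
      · simp
      · simp [zero_rpow hq.ne']
    rw [hval]
    refine (((continuous_rpow_const hq).comp continuous_abs).continuousAt.tendsto.mono_left
      nhdsWithin_le_nhds).congr' ?_
    filter_upwards [self_mem_nhdsWithin] with s (hs : s ≠ 0)
    simp [slope_def_field, hs]
  · have hpos : HasDerivAt (fun s : ℝ => s ^ (q + 1)) ((q + 1) * t ^ q) t := by
      simpa using hasDerivAt_rpow_const (p := q + 1) (Or.inl ht.ne')
    rw [abs_of_pos ht]
    refine hpos.congr_of_eventuallyEq ?_
    filter_upwards [eventually_gt_nhds ht] with s hs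
    rw [abs_of_pos hs, rpow_add_one hs.ne']
    ring

lemma mul_abs_rpow_sub_mul_abs_rpow {q : ℝ} (hq : 0 ≤ q) (x y : ℝ) :
    x * |x| ^ q - y * |y| ^ q = (q + 1) * ∫ t in y..x, |t| ^ q := by
  rw [← intervalIntegral.integral_const_mul]
  exact (intervalIntegral.integral_eq_sub_of_hasDerivAt
    (fun t _ => hasDerivAt_mul_abs_rpow hq t)
    ((continuous_const.mul ((continuous_rpow_const hq).comp continuous_abs)).intervalIntegrable
      y x)).symm

lemma monotone_mul_abs_rpow {q : ℝ} (hq : 0 ≤ q) : Monotone fun t : ℝ => t * |t| ^ q := by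
  intro y x hyx
  have hI : 0 ≤ ∫ t in y..x, |t| ^ q :=
    intervalIntegral.integral_nonneg hyx fun t _ => rpow_nonneg (abs_nonneg t) q
  have := mul_abs_rpow_sub_mul_abs_rpow hq x y
  nlinarith

lemma abs_sub_abs_rpow_le_abs_sub_mul_abs_rpow {p : ℝ} (hp : p ≠ 0) (x y : ℝ) :
    |(|x| ^ p - |y| ^ p)| ≤ |x * |x| ^ (p - 1) - y * |y| ^ (p - 1)| := by
  have habs : ∀ z : ℝ, |z * |z| ^ (p - 1)| = |z| ^ p := fun z => by
    rw [abs_mul, abs_of_nonneg (rpow_nonneg (abs_nonneg z) _), ← rpow_one_add' (abs_nonneg z)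
      (by simpa using hp), add_sub_cancel]
  simpa only [habs] using abs_abs_sub_abs_le_abs_sub (x * |x| ^ (p - 1)) (y * |y| ^ (p - 1))

lemma sq_intervalIntegral_le_mul_integral_sq {f : ℝ → ℝ} (hf : Continuous f) {a b : ℝ}
    (hab : a ≤ b) : (∫ t in a..b, f t) ^ 2 ≤ (b - a) * ∫ t in a..b, f t ^ 2 := by
  rcases hab.eq_or_lt with rfl | hab
  · simp
  have : NeZero (volume.restrict (Set.uIoc a b)) :=
    ⟨by simpa [Measure.restrict_eq_zero, Set.uIoc_of_le hab.le] using hab⟩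
  have : IsFiniteMeasure (volume.restrict (Set.uIoc a b)) :=
    ⟨by simp [Set.uIoc_of_le hab.le]⟩
  have jensen : (⨍ t in a..b, f t) ^ 2 ≤ ⨍ t in a..b, f t ^ 2 :=
    even_two.convexOn_pow.map_average_le (continuous_pow 2).continuousOn isClosed_univ
      (by simp) (hf.integrableOn_uIcc.mono_set Set.uIoc_subset_uIcc)
      ((hf.pow 2).integrableOn_uIcc.mono_set Set.uIoc_subset_uIcc)
  rw [interval_average_eq_div, interval_average_eq_div, div_pow,
    div_le_div_iff₀ (by positivity) (by linarith)] at jensen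
  nlinarith [sub_pos.2 hab]

lemma stroock_varopoulos {r : ℝ} (hr : 2 ≤ r) (x y : ℝ) :
    4 * (r - 1) / r ^ 2 * (|x| ^ (r / 2) - |y| ^ (r / 2)) ^ 2
      ≤ (x - y) * (x * |x| ^ (r - 2) - y * |y| ^ (r - 2)) := by
  wlog hyx : y ≤ x generalizing x y
  · convert this y x (le_of_not_ge hyx) using 1 <;> ring
  have hg : Continuous fun t : ℝ => |t| ^ (r / 2 - 1) :=
    (continuous_rpow_const (by linarith)).comp continuous_abs
  set I := ∫ t in y..x, |t| ^ (r / 2 - 1)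
  have hI : 0 ≤ I := intervalIntegral.integral_nonneg hyx fun t _ => rpow_nonneg (abs_nonneg t) _
  have hsq : ∀ t : ℝ, (|t| ^ (r / 2 - 1)) ^ 2 = |t| ^ (r - 2) := fun t => by
    rw [← rpow_mul_natCast (abs_nonneg t)]
    ring_nf
  have hCS : I ^ 2 ≤ (x - y) * ∫ t in y..x, |t| ^ (r - 2) := by
    simpa only [hsq] using sq_intervalIntegral_le_mul_integral_sq hg hyx
  have hψ : |(|x| ^ (r / 2) - |y| ^ (r / 2))| ≤ r / 2 * I := by
    refine (abs_sub_abs_rpow_le_abs_sub_mul_abs_rpow (by positivity) x y).trans_eq ?_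
    rw [mul_abs_rpow_sub_mul_abs_rpow (by linarith), sub_add_cancel, abs_mul, abs_of_nonneg hI,
      abs_of_pos (by positivity)]
  calc 4 * (r - 1) / r ^ 2 * (|x| ^ (r / 2) - |y| ^ (r / 2)) ^ 2
      ≤ 4 * (r - 1) / r ^ 2 * (r / 2 * I) ^ 2 := by
        refine mul_le_mul_of_nonneg_left (sq_le_sq.2 (hψ.trans (le_abs_self _))) ?_
        exact div_nonneg (by linarith) (by positivity)
    _ = (r - 1) * I ^ 2 := by field_simp; ring
    _ ≤ (r - 1) * ((x - y) * ∫ t in y..x, |t| ^ (r - 2)) := by gcongr; linarith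
    _ = (x - y) * (x * |x| ^ (r - 2) - y * |y| ^ (r - 2)) := by
        rw [mul_abs_rpow_sub_mul_abs_rpow (by linarith)]
        ring

lemma sub_mul_sub_le_of_lipschitzWith_one {T g : ℝ → ℝ} (hT : LipschitzWith 1 T)
    (hg : Monotone g) (a b : ℝ) : (T a - T b) * (g a - g b) ≤ (a - b) * (g a - g b) := by
  wlog hba : b ≤ a generalizing a b
  · convert this b a (le_of_not_ge hba) using 1 <;> ring
  have hTab : T a - T b ≤ a - b := by
    have := hT.dist_le_mul a b
    rw [NNReal.coe_one, one_mul, Real.dist_eq, Real.dist_eq, abs_of_nonneg (sub_nonneg.2 hba)]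
      at this
    exact (le_abs_self _).trans this
  exact mul_le_mul_of_nonneg_right hTab (sub_nonneg.2 (hg hba))

theorem statement_5_general (a b r k : ℝ) (hr : 2 ≤ r) :
    (4 * (r - 1) / r ^ 2) *
        (|max (-k) (min a k)| ^ (r / 2) - |max (-k) (min b k)| ^ (r / 2)) ^ 2
      ≤ (a - b) *
          (max (-k) (min a k) * |max (-k) (min a k)| ^ (r - 2)
            - max (-k) (min b k) * |max (-k) (min b k)| ^ (r - 2)) := by
  have hT : LipschitzWith 1 fun t : ℝ => max (-k) (min t k) :=
    (LipschitzWith.id.min_const k).const_max (-k)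
  have hφT : Monotone fun t : ℝ => max (-k) (min t k) * |max (-k) (min t k)| ^ (r - 2) :=
    (monotone_mul_abs_rpow (by linarith)).comp (monotone_const.max (monotone_id.min monotone_const))
  exact (stroock_varopoulos hr _ _).trans (sub_mul_sub_le_of_lipschitzWith_one hT hφT a b)

/-- Lemma lemch2: for all `a b ∈ ℝ`, `r ≥ 2`, `k ≥ 0`, with
`a_k = max{−k, min{a,k}}` and `b_k = max{−k, min{b,k}}`, one has
`(4(r−1)/r²)(|a_k|^{r/2} − |b_k|^{r/2})² ≤ (a−b)(a_k|a_k|^{r−2} − b_k|b_k|^{r−2})`. -/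
theorem statement_5 (a b r k : ℝ) (hr : 2 ≤ r) (hk : 0 ≤ k) :
    (4 * (r - 1) / r ^ 2) *
        (|max (-k) (min a k)| ^ (r / 2) - |max (-k) (min b k)| ^ (r / 2)) ^ 2
      ≤ (a - b) *
          (max (-k) (min a k) * |max (-k) (min a k)| ^ (r - 2)
            - max (-k) (min b k) * |max (-k) (min b k)| ^ (r - 2)) :=
  statement_5_general a b r k hr
end

section
/- Let q ∈ (0,1). Let u̲ ∈ X₀ with u̲ > 0 a.e. in Ω be a weak solution of (−Δ)^s u̲ = u̲^{q−1} in Ω, u̲ = 0 in ℝ^N∖Ω, and let u ∈ X₀ with u > 0 a.e. in Ω be a weak supersolution of the same equation, i.e. ⟨u,φ⟩ ≥ ∫_Ω u^{q−1}φ dx for every φ ∈ X₀ with φ ≥ 0. Then u̲ ≤ u a.e. in Ω. -/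
/-!
Test both equations with `φ = (u̲ - u)⁺ ∈ X₀`. Since `t ↦ t ^ (q - 1)` is decreasing and `φ` is
supported where `u̲ > u > 0`, this gives `⟨u̲ - u, φ⟩ ≤ ∫_Ω (u̲ ^ (q - 1) - u ^ (q - 1)) φ ≤ 0`.
On the other hand `(φ x - φ y)² ≤ ((u̲ - u) x - (u̲ - u) y) (φ x - φ y)` pointwise, so the
Gagliardo seminorm of `φ` is bounded by `⟨u̲ - u, φ⟩` and vanishes. Hence `φ` is a.e. constant;
as it vanishes off the bounded set `Ω`, whose complement has infinite measure, `φ = 0` a.e.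
-/

open MeasureTheory Metric Set
open scoped ENNReal

noncomputable section

/-- The squared Gagliardo seminorm
`‖u‖² = ∫∫ |u(x)−u(y)|²/|x−y|^{N+2s} dx dy` of `u : ℝ^N → ℝ`. -/
def gagSq (N : ℕ) (s : ℝ) (u : EuclideanSpace ℝ (Fin N) → ℝ) : ℝ :=
  ∫ p : EuclideanSpace ℝ (Fin N) × EuclideanSpace ℝ (Fin N),
    (u p.1 - u p.2) ^ 2 / dist p.1 p.2 ^ ((N : ℝ) + 2 * s)

/-- The bilinear form `⟨u,v⟩ = ∫∫ (u(x)−u(y))(v(x)−v(y))/|x−y|^{N+2s} dx dy`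
associated with the fractional Laplacian `(−Δ)^s`. -/
def gagForm (N : ℕ) (s : ℝ) (u v : EuclideanSpace ℝ (Fin N) → ℝ) : ℝ :=
  ∫ p : EuclideanSpace ℝ (Fin N) × EuclideanSpace ℝ (Fin N),
    (u p.1 - u p.2) * (v p.1 - v p.2) / dist p.1 p.2 ^ ((N : ℝ) + 2 * s)

/-- Membership in the energy space `X₀`: `u ∈ L²(ℝ^N)`, `u = 0` a.e. outside `Ω`,
and the Gagliardo seminorm of `u` is finite. -/
structure MemX0 (N : ℕ) (s : ℝ) (Ω : Set (EuclideanSpace ℝ (Fin N)))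
    (u : EuclideanSpace ℝ (Fin N) → ℝ) : Prop where
  memL2 : MemLp u 2 volume
  zero_outside : ∀ᵐ x, x ∉ Ω → u x = 0
  gag_integrable : Integrable
    (fun p : EuclideanSpace ℝ (Fin N) × EuclideanSpace ℝ (Fin N) =>
      (u p.1 - u p.2) ^ 2 / dist p.1 p.2 ^ ((N : ℝ) + 2 * s)) volume

theorem sq_max_sub_max_le_mul (a b : ℝ) :
    (max a 0 - max b 0) ^ 2 ≤ (a - b) * (max a 0 - max b 0) := by
  rcases le_total a 0 with ha | ha <;> rcases le_total b 0 with hb | hb <;>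
    simp only [max_eq_left, max_eq_right, ha, hb] <;> nlinarith

theorem rpow_sub_rpow_mul_max_sub_nonpos {a b p : ℝ} (hb : 0 < b) (hp : p ≤ 0) :
    (a ^ p - b ^ p) * max (a - b) 0 ≤ 0 := by
  rcases le_or_gt a b with hab | hab
  · simp [max_eq_right (sub_nonpos.2 hab)]
  · exact mul_nonpos_of_nonpos_of_nonneg
      (sub_nonpos.2 (Real.rpow_le_rpow_of_nonpos hb hab.le hp)) (le_max_right _ _)

theorem dist_rpow_nonneg {X : Type*} [PseudoMetricSpace X] (x y : X) (r : ℝ) :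
    0 ≤ dist x y ^ r :=
  Real.rpow_nonneg dist_nonneg r

theorem abs_div_le_div_of_abs_le {x y d : ℝ} (hd : 0 ≤ d) (h : |x| ≤ y) : |x / d| ≤ y / d := by
  rw [abs_div, abs_of_nonneg hd]
  exact div_le_div_of_nonneg_right h hd

section ProductMeasure

variable {α : Type*} [MeasurableSpace α]

theorem ae_prod_fst_ne_snd [MeasurableEq α] (μ : Measure α) [SFinite μ]
    [NullSingletonClass μ] :
    ∀ᵐ p ∂μ.prod μ, p.1 ≠ p.2 :=
  (Measure.ae_prod_iff_ae_ae measurableSet_diagonal.compl).2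
    (ae_of_all _ fun x => (μ.ae_ne x).mono fun _ h => h.symm)

theorem ae_eq_const_of_ae_prod_eq {μ : Measure α} [SFinite μ] {β : Type*} {f : α → β} {c : β}
    {t : Set α}
    (hf : ∀ᵐ p ∂μ.prod μ, f p.1 = f p.2) (ht : μ t ≠ 0) (hft : ∀ᵐ x ∂μ, x ∈ t → f x = c) :
    ∀ᵐ x ∂μ, f x = c := by
  filter_upwards [Measure.ae_ae_of_ae_prod hf] with x hx
  obtain ⟨y, hyt, hxy, hyc⟩ : ∃ y ∈ t, f x = f y ∧ (y ∈ t → f y = c) := by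
    by_contra h
    exact ht (measure_mono_null (fun y hy hP => h ⟨y, hy, hP⟩) (ae_iff.1 (hx.and hft)))
  rw [hxy, hyc hyt]

theorem MeasureTheory.AEStronglyMeasurable.sub_fst_snd {μ : Measure α} {f : α → ℝ}
    (hf : AEStronglyMeasurable f μ) :
    AEStronglyMeasurable (fun p : α × α => f p.1 - f p.2) (μ.prod μ) :=
  hf.comp_fst.sub hf.comp_snd

end ProductMeasure

section Gagliardo

variable {N : ℕ} {s : ℝ} {Ω : Set (EuclideanSpace ℝ (Fin N))}
  {u v w : EuclideanSpace ℝ (Fin N) → ℝ}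

local notation "E" => EuclideanSpace ℝ (Fin N)

theorem measurable_dist_rpow (r : ℝ) : Measurable fun p : E × E => dist p.1 p.2 ^ r :=
  measurable_dist.pow_const r

theorem MemX0.sub (hu : MemX0 N s Ω u) (hv : MemX0 N s Ω v) : MemX0 N s Ω (u - v) := by
  refine ⟨hu.memL2.sub hv.memL2, ?_, ?_⟩
  · filter_upwards [hu.zero_outside, hv.zero_outside] with x hux hvx hx
    simp [hux hx, hvx hx]
  · refine Integrable.mono'
      ((hu.gag_integrable.const_mul 2).add (hv.gag_integrable.const_mul 2))
      (((hu.memL2.1.sub hv.memL2.1).sub_fst_snd.pow 2).div₀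
        (measurable_dist_rpow _).aestronglyMeasurable) (ae_of_all _ fun p => ?_)
    have hnum : |((u - v) p.1 - (u - v) p.2) ^ 2| ≤
        2 * (u p.1 - u p.2) ^ 2 + 2 * (v p.1 - v p.2) ^ 2 := by
      rw [abs_of_nonneg (sq_nonneg _)]
      simp only [Pi.sub_apply]
      nlinarith [sq_nonneg (u p.1 - u p.2 + (v p.1 - v p.2))]
    refine (abs_div_le_div_of_abs_le (dist_rpow_nonneg p.1 p.2 _) hnum).trans_eq ?_
    simp only [Pi.add_apply]
    ring

theorem MemX0.max_zero (hu : MemX0 N s Ω u) : MemX0 N s Ω fun x => max (u x) 0 := by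
  refine ⟨hu.memL2.pos_part, ?_, ?_⟩
  · filter_upwards [hu.zero_outside] with x hux hx
    simp [hux hx]
  · refine Integrable.mono' hu.gag_integrable
      ((hu.memL2.pos_part.1.sub_fst_snd.pow 2).div₀
        (measurable_dist_rpow _).aestronglyMeasurable) (ae_of_all _ fun p => ?_)
    refine abs_div_le_div_of_abs_le (dist_rpow_nonneg p.1 p.2 _) ?_
    rw [abs_of_nonneg (sq_nonneg _)]
    exact sq_le_sq.2 (abs_max_sub_max_le_abs _ _ _)

theorem MemX0.integrable_gagForm_integrand (hu : MemX0 N s Ω u) (hv : MemX0 N s Ω v) :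
    Integrable fun p : E × E =>
      (u p.1 - u p.2) * (v p.1 - v p.2) / dist p.1 p.2 ^ ((N : ℝ) + 2 * s) := by
  refine Integrable.mono' ((hu.gag_integrable.div_const 2).add (hv.gag_integrable.div_const 2))
    ((hu.memL2.1.sub_fst_snd.mul hv.memL2.1.sub_fst_snd).div₀
      (measurable_dist_rpow _).aestronglyMeasurable) (ae_of_all _ fun p => ?_)
  have hnum : |(u p.1 - u p.2) * (v p.1 - v p.2)| ≤
      (u p.1 - u p.2) ^ 2 / 2 + (v p.1 - v p.2) ^ 2 / 2 := by
    rw [abs_mul]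
    nlinarith [sq_nonneg (|u p.1 - u p.2| - |v p.1 - v p.2|), sq_abs (u p.1 - u p.2),
      sq_abs (v p.1 - v p.2)]
  refine (abs_div_le_div_of_abs_le (dist_rpow_nonneg p.1 p.2 _) hnum).trans_eq ?_
  simp only [Pi.add_apply]
  ring

theorem gagForm_sub_left (hu : MemX0 N s Ω u) (hv : MemX0 N s Ω v) (hw : MemX0 N s Ω w) :
    gagForm N s (u - v) w = gagForm N s u w - gagForm N s v w := by
  rw [gagForm, gagForm, gagForm, ← integral_sub (hu.integrable_gagForm_integrand hw)
    (hv.integrable_gagForm_integrand hw)]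
  congr 1 with p
  simp only [Pi.sub_apply]
  ring

theorem gagSq_max_zero_le_gagForm (hu : MemX0 N s Ω u) :
    gagSq N s (fun x => max (u x) 0) ≤ gagForm N s u fun x => max (u x) 0 :=
  integral_mono hu.max_zero.gag_integrable (hu.integrable_gagForm_integrand hu.max_zero)
    fun p => div_le_div_of_nonneg_right (sq_max_sub_max_le_mul _ _) (dist_rpow_nonneg p.1 p.2 _)

theorem gagSq_nonneg : 0 ≤ gagSq N s u :=
  integral_nonneg fun p => div_nonneg (sq_nonneg _) (dist_rpow_nonneg p.1 p.2 _)

theorem ae_eq_of_gagSq_eq_zero [Nontrivial E]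
    (hu : Integrable fun p : E × E => (u p.1 - u p.2) ^ 2 / dist p.1 p.2 ^ ((N : ℝ) + 2 * s))
    (h : gagSq N s u = 0) : ∀ᵐ p : E × E, u p.1 = u p.2 := by
  have hzero := (integral_eq_zero_iff_of_nonneg
    (fun p : E × E => div_nonneg (sq_nonneg _) (dist_rpow_nonneg p.1 p.2 _)) hu).1 h
  filter_upwards [hzero, ae_prod_fst_ne_snd (volume : Measure E)] with p hp hne
  have hd : dist p.1 p.2 ^ ((N : ℝ) + 2 * s) ≠ 0 := (Real.rpow_pos_of_pos (dist_pos.2 hne) _).ne'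
  simpa [hd, sub_eq_zero] using hp

theorem MemX0.ae_eq_zero_of_gagSq_eq_zero [Nontrivial E] (hΩ : Bornology.IsBounded Ω)
    (hu : MemX0 N s Ω u) (h : gagSq N s u = 0) : ∀ᵐ x, u x = 0 := by
  refine ae_eq_const_of_ae_prod_eq (t := Ωᶜ) (ae_eq_of_gagSq_eq_zero hu.gag_integrable h) ?_
    hu.zero_outside
  intro hΩc
  have := measure_univ_le_add_compl (μ := (volume : Measure E)) Ω
  rw [measure_univ_of_isAddLeftInvariant, hΩc, add_zero, top_le_iff] at this
  exact hΩ.measure_lt_top.ne this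

end Gagliardo

theorem statement_8_general (N : ℕ) (hN : 2 ≤ N) (s : ℝ)
    (Ω : Set (EuclideanSpace ℝ (Fin N))) (hΩbd : Bornology.IsBounded Ω)
    (q : ℝ) (hq : q ∈ Set.Ioo (0 : ℝ) 1)
    (ubar u : EuclideanSpace ℝ (Fin N) → ℝ)
    (hubar : MemX0 N s Ω ubar) (hu : MemX0 N s Ω u)
    (hu_pos : ∀ᵐ x ∂(volume.restrict Ω), 0 < u x)
    (hubar_int : ∀ φ : EuclideanSpace ℝ (Fin N) → ℝ, MemX0 N s Ω φ →
      IntegrableOn (fun x => ubar x ^ (q - 1) * φ x) Ω volume)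
    (hu_int : ∀ φ : EuclideanSpace ℝ (Fin N) → ℝ, MemX0 N s Ω φ → (∀ x, 0 ≤ φ x) →
      IntegrableOn (fun x => u x ^ (q - 1) * φ x) Ω volume)
    (hsol : ∀ φ : EuclideanSpace ℝ (Fin N) → ℝ, MemX0 N s Ω φ →
      gagForm N s ubar φ = ∫ x in Ω, ubar x ^ (q - 1) * φ x)
    (hsuper : ∀ φ : EuclideanSpace ℝ (Fin N) → ℝ, MemX0 N s Ω φ → (∀ x, 0 ≤ φ x) →
      (∫ x in Ω, u x ^ (q - 1) * φ x) ≤ gagForm N s u φ) :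
    ∀ᵐ x ∂(volume.restrict Ω), ubar x ≤ u x := by
  have : Nontrivial (EuclideanSpace ℝ (Fin N)) :=
    Module.nontrivial_of_finrank_pos (R := ℝ) (by rw [finrank_euclideanSpace_fin]; omega)
  set φ : EuclideanSpace ℝ (Fin N) → ℝ := fun x => max ((ubar - u) x) 0
  have hφ : MemX0 N s Ω φ := (hubar.sub hu).max_zero
  have hφ_nonneg : ∀ x, 0 ≤ φ x := fun x => le_max_right _ _
  have hsingular : ∫ x in Ω, ubar x ^ (q - 1) * φ x - u x ^ (q - 1) * φ x ≤ 0 := by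
    refine integral_nonpos_of_ae ?_
    filter_upwards [hu_pos] with x hx
    rw [← sub_mul]
    exact rpow_sub_rpow_mul_max_sub_nonpos hx (by linarith [hq.2])
  have hφ_energy : gagSq N s φ = 0 := by
    refine le_antisymm ?_ gagSq_nonneg
    calc gagSq N s φ ≤ gagForm N s (ubar - u) φ := gagSq_max_zero_le_gagForm (hubar.sub hu)
      _ = gagForm N s ubar φ - gagForm N s u φ := gagForm_sub_left hubar hu hφ
      _ ≤ (∫ x in Ω, ubar x ^ (q - 1) * φ x) - ∫ x in Ω, u x ^ (q - 1) * φ x := by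
        rw [hsol φ hφ]; linarith [hsuper φ hφ hφ_nonneg]
      _ = ∫ x in Ω, ubar x ^ (q - 1) * φ x - u x ^ (q - 1) * φ x :=
        (integral_sub (hubar_int φ hφ) (hu_int φ hφ hφ_nonneg)).symm
      _ ≤ 0 := hsingular
  filter_upwards [ae_restrict_of_ae (hφ.ae_eq_zero_of_gagSq_eq_zero hΩbd hφ_energy)] with x hx
  exact sub_nonpos.1 (max_eq_right_iff.1 hx)

/-- comparison with the solution of the singular problem. If `u̲ ∈ X₀`,
`u̲ > 0` a.e. in `Ω`, is a weak solution of `(−Δ)^s u̲ = u̲^{q−1}` in `Ω`, `u̲ = 0` outside `Ω`,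
and `u ∈ X₀`, `u > 0` a.e. in `Ω`, is a weak supersolution of the same equation, then
`u̲ ≤ u` a.e. in `Ω`. -/
theorem statement_8 (N : ℕ) (hN : 2 ≤ N) (s : ℝ) (hs : s ∈ Set.Ioo (0 : ℝ) 1)
    (Ω : Set (EuclideanSpace ℝ (Fin N))) (hΩo : IsOpen Ω) (hΩbd : Bornology.IsBounded Ω)
    (q : ℝ) (hq : q ∈ Set.Ioo (0 : ℝ) 1)
    (ubar u : EuclideanSpace ℝ (Fin N) → ℝ)
    (hubar : MemX0 N s Ω ubar) (hu : MemX0 N s Ω u)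
    (hubar_pos : ∀ᵐ x ∂(volume.restrict Ω), 0 < ubar x)
    (hu_pos : ∀ᵐ x ∂(volume.restrict Ω), 0 < u x)
    (hubar_int : ∀ φ : EuclideanSpace ℝ (Fin N) → ℝ, MemX0 N s Ω φ →
      IntegrableOn (fun x => ubar x ^ (q - 1) * φ x) Ω volume)
    (hu_int : ∀ φ : EuclideanSpace ℝ (Fin N) → ℝ, MemX0 N s Ω φ → (∀ x, 0 ≤ φ x) →
      IntegrableOn (fun x => u x ^ (q - 1) * φ x) Ω volume)
    (hsol : ∀ φ : EuclideanSpace ℝ (Fin N) → ℝ, MemX0 N s Ω φ →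
      gagForm N s ubar φ = ∫ x in Ω, ubar x ^ (q - 1) * φ x)
    (hsuper : ∀ φ : EuclideanSpace ℝ (Fin N) → ℝ, MemX0 N s Ω φ → (∀ x, 0 ≤ φ x) →
      (∫ x in Ω, u x ^ (q - 1) * φ x) ≤ gagForm N s u φ) :
    ∀ᵐ x ∂(volume.restrict Ω), ubar x ≤ u x :=
  statement_8_general N hN s Ω hΩbd q hq ubar u hubar hu hu_pos hubar_int hu_int hsol hsuper
end
end
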